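/- With the same setup, the total variation distance between the SCP solutions satisfies d_TV(p̂, r̂) = d_TV(QP, QR) ≤ d_TV(P, R); in particular the SCP solution operator is non-expansive and uniformly continuous in the total variation metric. -/

import Mathlib

/-!
The SCP solution with data density `f` is `(f / τ)(Q λ) · ρ_p(λ)`: a factor depending on `λ` only
through `Q λ`, times a weight common to all data. Pushing it forward along `Q` cancels `τ` against the
pushforward of the prior, so `Q` maps `p̂, r̂` to `QP, QR`. Because the two SCP densities share the weight
`ρ_p / τ ∘ Q`, the Hahn set `{r̂ ≤ p̂}` may be taken to be the `Q`-preimage of `{r ≤ p}`; hence no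
measurable set separates `p̂` from `r̂` better than a preimage does, and the total variation distance is
unchanged by `Q`. The inequality is the data-processing inequality for pushforwards.
-/

open MeasureTheory ENNReal

/-- Total variation distance: supremum over measurable sets. -/
noncomputable def tvDist {Ω : Type*} [MeasurableSpace Ω] (P R : Measure Ω) : ℝ :=
  ⨆ E : {s : Set Ω // MeasurableSet s}, |(P E.1).toReal - (R E.1).toReal|

open Set

section TotalVariation

variable {Ω Ω' : Type*} [MeasurableSpace Ω] [MeasurableSpace Ω']

theorem tvDist_comm (P R : Measure Ω) : tvDist P R = tvDist R P := by
  simp only [tvDist, abs_sub_comm]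

theorem tvDist_le {P R : Measure Ω} {c : ℝ}
    (h : ∀ s, MeasurableSet s → |(P s).toReal - (R s).toReal| ≤ c) : tvDist P R ≤ c :=
  have : Nonempty {s : Set Ω // MeasurableSet s} := ⟨⟨∅, .empty⟩⟩
  ciSup_le fun s => h s.1 s.2

theorem le_tvDist (P R : Measure Ω) [IsFiniteMeasure P] [IsFiniteMeasure R] {s : Set Ω}
    (hs : MeasurableSet s) : |(P s).toReal - (R s).toReal| ≤ tvDist P R := by
  unfold tvDist
  refine le_ciSup (f := fun t : {s : Set Ω // MeasurableSet s} => |(P t.1).toReal - (R t.1).toReal|)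
    ⟨(P univ).toReal + (R univ).toReal, ?_⟩ ⟨s, hs⟩
  rintro _ ⟨t, rfl⟩
  refine (abs_sub _ _).trans ?_
  rw [abs_of_nonneg toReal_nonneg, abs_of_nonneg toReal_nonneg]
  exact add_le_add (toReal_mono (measure_ne_top P _) (measure_mono (subset_univ _)))
    (toReal_mono (measure_ne_top R _) (measure_mono (subset_univ _)))

theorem tvDist_map_le (P R : Measure Ω) [IsFiniteMeasure P] [IsFiniteMeasure R] {f : Ω → Ω'}
    (hf : Measurable f) : tvDist (P.map f) (R.map f) ≤ tvDist P R :=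
  tvDist_le fun s hs => by
    rw [Measure.map_apply hf hs, Measure.map_apply hf hs]
    exact le_tvDist P R (hf hs)

theorem withDensity_add_le_of_le_on {m : Measure Ω} {a b : Ω → ℝ≥0∞} (ha : Measurable a)
    {D E : Set Ω} (hD : MeasurableSet D) (hE : MeasurableSet E)
    (hba : ∀ x ∈ D, b x ≤ a x) (hab : ∀ x ∉ D, a x ≤ b x) :
    m.withDensity a E + m.withDensity b D ≤ m.withDensity a D + m.withDensity b E := by
  rw [withDensity_apply _ hE, withDensity_apply _ hD, withDensity_apply _ hD,
    withDensity_apply _ hE, ← lintegral_indicator hE, ← lintegral_indicator hD,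
    ← lintegral_indicator hD, ← lintegral_indicator hE,
    ← lintegral_add_left (ha.indicator hE), ← lintegral_add_left (ha.indicator hD)]
  refine lintegral_mono fun x => ?_
  by_cases hxD : x ∈ D <;> by_cases hxE : x ∈ E <;> simp [hxD, hxE]
  · exact hba x hxD
  · exact hab x hxD

/-- `D` plays the role of a Hahn set for `m.withDensity a - m.withDensity b`. -/
theorem toReal_withDensity_sub_le_of_le_on {m : Measure Ω} {a b : Ω → ℝ≥0∞}
    [IsFiniteMeasure (m.withDensity a)] [IsFiniteMeasure (m.withDensity b)] (ha : Measurable a)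
    {D E : Set Ω} (hD : MeasurableSet D) (hE : MeasurableSet E)
    (hba : ∀ x ∈ D, b x ≤ a x) (hab : ∀ x ∉ D, a x ≤ b x) :
    (m.withDensity a E).toReal - (m.withDensity b E).toReal
      ≤ (m.withDensity a D).toReal - (m.withDensity b D).toReal := by
  have h := toReal_mono (add_ne_top.2 ⟨measure_ne_top _ _, measure_ne_top _ _⟩)
    (withDensity_add_le_of_le_on (m := m) ha hD hE hba hab)
  rw [toReal_add (measure_ne_top _ _) (measure_ne_top _ _),
    toReal_add (measure_ne_top _ _) (measure_ne_top _ _)] at h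
  linarith

end TotalVariation

section FactorDensity

variable {Λ 𝒟 : Type*} [MeasurableSpace Λ] [MeasurableSpace 𝒟] {Q : Λ → 𝒟}

theorem map_withDensity_comp (hQ : Measurable Q) (μ : Measure Λ) {f : 𝒟 → ℝ≥0∞}
    (hf : Measurable f) : (μ.withDensity (f ∘ Q)).map Q = (μ.map Q).withDensity f := by
  ext s hs
  rw [Measure.map_apply hQ hs, withDensity_apply _ hs, withDensity_apply _ (hQ hs),
    setLIntegral_map hs hf hQ, Function.comp_def]

theorem map_withDensity_comp_mul (hQ : Measurable Q) (μ : Measure Λ) {f : 𝒟 → ℝ≥0∞}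
    {ρ : Λ → ℝ≥0∞} (hf : Measurable f) (hρ : Measurable ρ) :
    (μ.withDensity fun l => f (Q l) * ρ l).map Q = ((μ.withDensity ρ).map Q).withDensity f := by
  rw [← map_withDensity_comp hQ _ hf, ← withDensity_mul μ hρ (hf.comp hQ)]
  congr 2 with l
  exact mul_comm _ _

theorem ae_ne_top_of_map_withDensity_eq (hQ : Measurable Q) {μ : Measure Λ} {ν : Measure 𝒟}
    {ρ : Λ → ℝ≥0∞} {τ : 𝒟 → ℝ≥0∞} (hτ : Measurable τ) (hρ : ∫⁻ l, ρ l ∂μ ≠ ∞)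
    (hτmap : (μ.withDensity ρ).map Q = ν.withDensity τ) : ∀ᵐ q ∂ν, τ q ≠ ∞ := by
  have hmass : ∫⁻ q, τ q ∂ν = ∫⁻ l, ρ l ∂μ := by
    have h := congrArg (· univ) hτmap
    simp only [Measure.map_apply hQ .univ, preimage_univ, withDensity_apply _ .univ,
      Measure.restrict_univ] at h
    exact h.symm
  exact (ae_lt_top hτ (hmass ▸ hρ)).mono fun _ => ne_of_lt

theorem map_withDensity_div_comp_mul (hQ : Measurable Q) {μ : Measure Λ} {ν : Measure 𝒟}
    {f : 𝒟 → ℝ≥0∞} {ρ : Λ → ℝ≥0∞} {τ : 𝒟 → ℝ≥0∞} (hf : Measurable f) (hρ : Measurable ρ)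
    (hτ : Measurable τ) (hτmap : (μ.withDensity ρ).map Q = ν.withDensity τ)
    (hτ0 : ∀ᵐ q ∂ν, τ q ≠ 0) (hτtop : ∀ᵐ q ∂ν, τ q ≠ ∞) :
    (μ.withDensity fun l => (f / τ) (Q l) * ρ l).map Q = ν.withDensity f := by
  rw [map_withDensity_comp_mul hQ μ (hf.div hτ) hρ, hτmap, ← withDensity_mul ν hτ (hf.div hτ)]
  refine withDensity_congr_ae ?_
  filter_upwards [hτ0, hτtop] with q h0 htop
  exact ENNReal.mul_div_cancel h0 htop

theorem toReal_sub_le_tvDist_map_of_withDensity_comp_mul (hQ : Measurable Q) {m : Measure Λ}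
    {f g : 𝒟 → ℝ≥0∞} {w : Λ → ℝ≥0∞} (hf : Measurable f) (hg : Measurable g) (hw : Measurable w)
    {A B : Measure Λ} [IsFiniteMeasure A] [IsFiniteMeasure B]
    (hA : A = m.withDensity fun l => f (Q l) * w l) (hB : B = m.withDensity fun l => g (Q l) * w l)
    {E : Set Λ} (hE : MeasurableSet E) :
    (A E).toReal - (B E).toReal ≤ tvDist (A.map Q) (B.map Q) := by
  have hS : MeasurableSet {q | g q ≤ f q} := measurableSet_le hg hf
  subst hA hB
  calc _ ≤ _ := toReal_withDensity_sub_le_of_le_on (a := fun l => f (Q l) * w l)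
        ((hf.comp hQ).mul hw) (hQ hS) hE
        (fun l hl => mul_le_mul_left hl (w l))
        (fun l hl => mul_le_mul_left (le_of_not_ge hl) (w l))
    _ = _ := by rw [Measure.map_apply hQ hS, Measure.map_apply hQ hS]
    _ ≤ _ := (le_abs_self _).trans (le_tvDist _ _ hS)

theorem tvDist_eq_tvDist_map_of_withDensity_comp_mul (hQ : Measurable Q) {m : Measure Λ}
    {f g : 𝒟 → ℝ≥0∞} {w : Λ → ℝ≥0∞} (hf : Measurable f) (hg : Measurable g) (hw : Measurable w)
    {A B : Measure Λ} [IsFiniteMeasure A] [IsFiniteMeasure B]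
    (hA : A = m.withDensity fun l => f (Q l) * w l) (hB : B = m.withDensity fun l => g (Q l) * w l) :
    tvDist A B = tvDist (A.map Q) (B.map Q) := by
  refine le_antisymm (tvDist_le fun E hE => abs_sub_le_iff.2 ⟨?_, ?_⟩) (tvDist_map_le A B hQ)
  · exact toReal_sub_le_tvDist_map_of_withDensity_comp_mul hQ hf hg hw hA hB hE
  · rw [tvDist_comm]
    exact toReal_sub_le_tvDist_map_of_withDensity_comp_mul hQ hg hf hw hB hA hE

end FactorDensity

theorem scp_tv_stability_general
    {Λ 𝒟 : Type*} [MeasurableSpace Λ] [MeasurableSpace 𝒟]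
    (Q : Λ → 𝒟) (hQ : Measurable Q)
    (μ : Measure Λ) (ν : Measure 𝒟)
    (P R : Measure Λ) [IsProbabilityMeasure P] [IsProbabilityMeasure R]
    (p r : 𝒟 → ℝ≥0∞) (hp : Measurable p) (hr : Measurable r)
    (hPmap : P.map Q = ν.withDensity p) (hRmap : R.map Q = ν.withDensity r)
    (ρp : Λ → ℝ≥0∞) (hρp : Measurable ρp) (hρp1 : ∫⁻ l, ρp l ∂μ = 1)
    (τ : 𝒟 → ℝ≥0∞) (hτ : Measurable τ)
    (hτmap : (μ.withDensity ρp).map Q = ν.withDensity τ)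
    (hτpos : ∀ᵐ q ∂ν, 0 < τ q) :
    tvDist (μ.withDensity (fun l => p (Q l) * ρp l / τ (Q l)))
           (μ.withDensity (fun l => r (Q l) * ρp l / τ (Q l)))
      = tvDist (P.map Q) (R.map Q) ∧
    tvDist (P.map Q) (R.map Q) ≤ tvDist P R := by
  have hτtop : ∀ᵐ q ∂ν, τ q ≠ ∞ :=
    ae_ne_top_of_map_withDensity_eq hQ hτ (hρp1 ▸ one_ne_top) hτmap
  have hscp (f : 𝒟 → ℝ≥0∞) : (μ.withDensity fun l => f (Q l) * ρp l / τ (Q l))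
      = μ.withDensity fun l => (f / τ) (Q l) * ρp l := by
    simp only [Pi.div_apply, ENNReal.mul_div_right_comm]
  have hmap {f : 𝒟 → ℝ≥0∞} (hf : Measurable f) :
      (μ.withDensity fun l => f (Q l) * ρp l / τ (Q l)).map Q = ν.withDensity f := by
    rw [hscp]
    exact map_withDensity_div_comp_mul hQ hf hρp hτ hτmap (hτpos.mono fun _ h => h.ne') hτtop
  have hPmap' := (hmap hp).trans hPmap.symm
  have hRmap' := (hmap hr).trans hRmap.symm
  have : IsFiniteMeasure (μ.withDensity fun l => p (Q l) * ρp l / τ (Q l)) :=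
    (Measure.isFiniteMeasure_map_iff hQ.aemeasurable).1 (hPmap' ▸ inferInstance)
  have : IsFiniteMeasure (μ.withDensity fun l => r (Q l) * ρp l / τ (Q l)) :=
    (Measure.isFiniteMeasure_map_iff hQ.aemeasurable).1 (hRmap' ▸ inferInstance)
  refine ⟨?_, tvDist_map_le P R hQ⟩
  rw [← hPmap', ← hRmap']
  exact tvDist_eq_tvDist_map_of_withDensity_comp_mul hQ (hp.div hτ) (hr.div hτ) hρp (hscp p) (hscp r)

/-- d_TV(p̂, r̂) = d_TV(QP, QR) ≤ d_TV(P, R): the SCP solution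
operator is non-expansive in the total variation metric. -/
theorem scp_tv_stability
    {Λ 𝒟 : Type*} [MeasurableSpace Λ] [MeasurableSpace 𝒟]
    (Q : Λ → 𝒟) (hQ : Measurable Q)
    (μ : Measure Λ) [SigmaFinite μ] (ν : Measure 𝒟) [SigmaFinite ν]
    (P R : Measure Λ) [IsProbabilityMeasure P] [IsProbabilityMeasure R]
    (p r : 𝒟 → ℝ≥0∞) (hp : Measurable p) (hr : Measurable r)
    (hPmap : P.map Q = ν.withDensity p) (hRmap : R.map Q = ν.withDensity r)
    (ρp : Λ → ℝ≥0∞) (hρp : Measurable ρp) (hρp1 : ∫⁻ l, ρp l ∂μ = 1)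
    (τ : 𝒟 → ℝ≥0∞) (hτ : Measurable τ)
    (hτmap : (μ.withDensity ρp).map Q = ν.withDensity τ)
    (hτpos : ∀ᵐ q ∂ν, 0 < τ q) :
    tvDist (μ.withDensity (fun l => p (Q l) * ρp l / τ (Q l)))
           (μ.withDensity (fun l => r (Q l) * ρp l / τ (Q l)))
      = tvDist (P.map Q) (R.map Q) ∧
    tvDist (P.map Q) (R.map Q) ≤ tvDist P R :=
  scp_tv_stability_general Q hQ μ ν P R p r hp hr hPmap hRmap ρp hρp hρp1 τ hτ hτmap hτpos
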